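/- Let F(X) = ∑_{n≥0} Dyck_n(d)·Xⁿ ∈ ℚ[[X]]. Then (3 - 2F)²·(1-X) = 1-5X as formal power series; that is, F = 3/2 - (1/2)·√((1-5X)/(1-X)) is the branch with constant term 1. -/

import Mathlib

/-- A step of a Dyck path: up `(1,1)` or down `(1,-1)`. -/
inductive DStep : Type
  | up : DStep
  | down : DStep
  deriving DecidableEq

instance : Fintype DStep := ⟨{DStep.up, DStep.down}, fun x => by cases x <;> simp⟩

/-- The vertical displacement of a Dyck step. -/
def DStep.val : DStep → ℤ
  | .up => 1
  | .down => -1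

/-- The height of the path after its first `k` steps. -/
def dHeight (l : List DStep) (k : ℕ) : ℤ := ((l.take k).map DStep.val).sum

/-- A list of steps is a Dyck path if it never goes below the x-axis and ends at height 0. -/
def IsDyck (l : List DStep) : Prop :=
  (∀ k : ℕ, 0 ≤ dHeight l k) ∧ dHeight l l.length = 0

/-- The weight of a Dyck path w.r.t. `c`: a factor `c i` for every down step of height `i`
(the height of a step being the `y`-coordinate of its ending point). -/
def dWeight (c : ℕ → ℚ) (l : List DStep) : ℚ :=
  ∏ i ∈ Finset.range l.length,
    match l.getD i DStep.up with
    | .up => 1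
    | .down => c (dHeight l (i + 1)).toNat

open Classical in
/-- `Dyck_n(c)`: the sum of the weights of all Dyck paths of length `2n`. -/
noncomputable def dyckSum (n : ℕ) (c : ℕ → ℚ) : ℚ :=
  ∑ f : Fin (2 * n) → DStep,
    if IsDyck (List.ofFn f) then dWeight c (List.ofFn f) else 0

/-- Fibonacci numbers extended to all integer indices:
`fibZ 0 = 0`, `fibZ 1 = 1`, `fibZ m = fibZ (m-1) + fibZ (m-2)` (so `fibZ (-1) = 1`). -/
def fibZ : ℤ → ℤ
  | Int.ofNat n => Nat.fib n
  | Int.negSucc n => (-1) ^ n * Nat.fib (n + 1)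

/-!
Write `Φ m` for the generating function, by half-length, of the weighted paths from height `2m`
down to `0`, so that `F = Φ 0`. Splitting off the first two steps gives the linear system
`Φ 0 = 1 + X (Φ 1 + d₀ Φ 0)` and
`Φ (m+1) = X (Φ (m+2) + (d_{2m+2} + d_{2m+1}) Φ (m+1) + d_{2m+1} d_{2m} Φ m)`,
which determines every coefficient by induction on the degree. The Fibonacci weights satisfy
`d_{2m+1} d_{2m+2} = 1` and `d_{2m+2} + d_{2m+3} = 3`, and for such weights the system is solved by
`Φ 0 = (1 + 2ρ) / (1 + ρ)` and `Φ (m+1) = ρ^(m+1) (d_{2m+1} + ρ) / (1 + ρ)`, where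
`ρ = X (ρ² + 3ρ + 1)` is the ratio `Φ (m+1) / Φ m` of the limiting system with constant
coefficients `3` and `1`; Hensel's lemma in `ℚ⟦X⟧` provides it. Then
`3 - 2F = (1 - ρ) / (1 + ρ)`, and the equation of `ρ` is exactly
`(1 - ρ)² (1 - X) = (1 + ρ)² (1 - 5X)`.
-/

open PowerSeries

def pathWeight (c : ℕ → ℚ) : ℕ → List DStep → ℚ
  | h, [] => if h = 0 then 1 else 0
  | h, .up :: l => pathWeight c (h + 1) l
  | 0, .down :: _ => 0
  | h + 1, .down :: l => c h * pathWeight c h l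

def pathSum (c : ℕ → ℚ) (h n : ℕ) : ℚ :=
  ∑ f : Fin n → DStep, pathWeight c h (List.ofFn f)

theorem DStep.sum_univ {M : Type*} [AddCommMonoid M] (f : DStep → M) :
    ∑ a, f a = f .up + f .down :=
  Finset.sum_pair (by decide)

theorem pathSum_zero (c : ℕ → ℚ) (h : ℕ) : pathSum c h 0 = if h = 0 then 1 else 0 := by
  simp [pathSum, pathWeight]

theorem pathSum_succ_eq_sum_cons (c : ℕ → ℚ) (h n : ℕ) :
    pathSum c h (n + 1) = ∑ a, ∑ f : Fin n → DStep, pathWeight c h (a :: List.ofFn f) := by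
  rw [pathSum, ← (Fin.consEquiv fun _ => DStep).sum_comp, Fintype.sum_prod_type]
  simp [Fin.consEquiv]

theorem pathSum_zero_succ (c : ℕ → ℚ) (n : ℕ) : pathSum c 0 (n + 1) = pathSum c 1 n := by
  rw [pathSum_succ_eq_sum_cons, DStep.sum_univ]
  simp [pathWeight, pathSum]

theorem pathSum_succ_succ (c : ℕ → ℚ) (h n : ℕ) :
    pathSum c (h + 1) (n + 1) = pathSum c (h + 2) n + c h * pathSum c h n := by
  rw [pathSum_succ_eq_sum_cons, DStep.sum_univ]
  simp [pathWeight, pathSum, Finset.mul_sum]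

def IsDyckFrom (h : ℤ) (l : List DStep) : Prop :=
  (∀ k : ℕ, 0 ≤ h + dHeight l k) ∧ h + dHeight l l.length = 0

def dWeightFrom (c : ℕ → ℚ) (h : ℤ) (l : List DStep) : ℚ :=
  ∏ i ∈ Finset.range l.length,
    match l.getD i DStep.up with
    | .up => 1
    | .down => c (h + dHeight l (i + 1)).toNat

theorem dHeight_cons_succ (a : DStep) (l : List DStep) (k : ℕ) :
    dHeight (a :: l) (k + 1) = a.val + dHeight l k := by
  simp [dHeight]

theorem isDyckFrom_nil {h : ℤ} : IsDyckFrom h [] ↔ h = 0 := by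
  simp only [IsDyckFrom, dHeight, List.take_nil, List.map_nil, List.sum_nil, add_zero,
    and_iff_right_iff_imp]
  rintro rfl _
  rfl

theorem IsDyckFrom.nonneg {h : ℤ} {l : List DStep} (hl : IsDyckFrom h l) : 0 ≤ h := by
  simpa [dHeight] using hl.1 0

theorem isDyckFrom_cons {h : ℤ} {a : DStep} {l : List DStep} :
    IsDyckFrom h (a :: l) ↔ 0 ≤ h ∧ IsDyckFrom (h + a.val) l := by
  simp only [IsDyckFrom, List.length_cons, dHeight_cons_succ, ← add_assoc]
  constructor
  · rintro ⟨hpos, hend⟩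
    exact ⟨by simpa [dHeight] using hpos 0,
      fun k => by simpa [dHeight_cons_succ, add_assoc] using hpos (k + 1), hend⟩
  · rintro ⟨h0, hpos, hend⟩
    refine ⟨fun k => ?_, hend⟩
    cases k with
    | zero => simpa [dHeight] using h0
    | succ k => rw [dHeight_cons_succ, ← add_assoc]; exact hpos k

theorem dWeightFrom_nil (c : ℕ → ℚ) (h : ℤ) : dWeightFrom c h [] = 1 := rfl

theorem dWeightFrom_cons_up (c : ℕ → ℚ) (h : ℤ) (l : List DStep) :
    dWeightFrom c h (.up :: l) = dWeightFrom c (h + 1) l := by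
  simp [dWeightFrom, Finset.prod_range_succ', dHeight_cons_succ, DStep.val, add_assoc, add_comm]

theorem dWeightFrom_cons_down (c : ℕ → ℚ) (h : ℤ) (l : List DStep) :
    dWeightFrom c h (.down :: l) = c (h - 1).toNat * dWeightFrom c (h - 1) l := by
  simp [dWeightFrom, Finset.prod_range_succ', DStep.val, dHeight, mul_comm, sub_eq_add_neg,
    add_assoc, add_comm]

open Classical in
theorem pathWeight_eq_ite (c : ℕ → ℚ) :
    ∀ (h : ℕ) (l : List DStep),
      pathWeight c h l = if IsDyckFrom h l then dWeightFrom c h l else 0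
  | h, [] => by simp [pathWeight, isDyckFrom_nil, dWeightFrom_nil]
  | h, .up :: l => by
    simp [pathWeight, pathWeight_eq_ite c (h + 1) l, isDyckFrom_cons, dWeightFrom_cons_up,
      DStep.val]
  | 0, .down :: l => by
    simpa [pathWeight, isDyckFrom_cons, DStep.val] using fun hl => absurd hl.nonneg (by norm_num)
  | h + 1, .down :: l => by
    simp [pathWeight, pathWeight_eq_ite c h l, isDyckFrom_cons, dWeightFrom_cons_down, DStep.val,
      show (0 : ℤ) ≤ h + 1 by positivity]

theorem dyckSum_eq_pathSum (c : ℕ → ℚ) (n : ℕ) : dyckSum n c = pathSum c 0 (2 * n) := by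
  classical
  refine Finset.sum_congr rfl fun f _ => ?_
  rw [pathWeight_eq_ite]
  simp [IsDyck, IsDyckFrom, dWeight, dWeightFrom]

def SolvesEvenHeightSystem (c : ℕ → ℚ) (Φ : ℕ → ℚ⟦X⟧) : Prop :=
  Φ 0 = 1 + X * (Φ 1 + C (c 0) * Φ 0) ∧
    ∀ m, Φ (m + 1) = X * (Φ (m + 2) + C (c (2 * m + 2) + c (2 * m + 1)) * Φ (m + 1) +
      C (c (2 * m + 1) * c (2 * m)) * Φ m)

theorem SolvesEvenHeightSystem.coeff_eq_pathSum {c : ℕ → ℚ} {Φ : ℕ → ℚ⟦X⟧}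
    (hΦ : SolvesEvenHeightSystem c Φ) (n m : ℕ) :
    coeff n (Φ m) = pathSum c (2 * m) (2 * n) := by
  induction n generalizing m with
  | zero =>
    cases m with
    | zero => rw [hΦ.1]; simp [pathSum_zero]
    | succ m => rw [hΦ.2 m]; simp [pathSum_zero]
  | succ n ih =>
    cases m with
    | zero =>
      rw [hΦ.1, map_add, coeff_succ_X_mul, map_add, coeff_C_mul, ih, ih]
      simp [pathSum_zero_succ, pathSum_succ_succ, mul_add]
    | succ m =>
      rw [hΦ.2 m, coeff_succ_X_mul, map_add, map_add, coeff_C_mul, coeff_C_mul, ih, ih, ih]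
      simp only [mul_add, show 2 * (n + 1) = 2 * n + 1 + 1 by ring,
        show 2 * (m + 2) = 2 * m + 4 by ring, show 2 * (m + 1) = 2 * m + 1 + 1 by ring,
        pathSum_succ_succ]
      ring

theorem PowerSeries.exists_eq_X_mul_sq_add {R : Type*} [CommRing R] (a b : R) :
    ∃ ρ : R⟦X⟧, ρ = X * (ρ ^ 2 + C b * ρ + C a) := by
  set f : Polynomial R⟦X⟧ := Polynomial.X ^ 2 - Polynomial.C (1 - C b * X) * Polynomial.X
    + Polynomial.C (C a * X ^ 2) with hf
  have hmonic : f.Monic := by rw [hf]; monicity!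
  have hf0 : f.eval 0 ∈ Ideal.span {X} := by
    rw [Ideal.mem_span_singleton]
    simp only [hf, Polynomial.eval_add, Polynomial.eval_sub, Polynomial.eval_mul,
      Polynomial.eval_pow, Polynomial.eval_C, Polynomial.eval_X]
    exact ⟨C a * X, by ring⟩
  have hf'0 : IsUnit (f.derivative.eval 0) := by
    simp only [hf, Polynomial.derivative_add, Polynomial.derivative_sub,
      Polynomial.derivative_X_pow, Polynomial.derivative_C_mul_X, Polynomial.derivative_C,
      Polynomial.eval_add,
      Polynomial.eval_sub, Polynomial.eval_mul, Polynomial.eval_pow, Polynomial.eval_C,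
      Polynomial.eval_X, isUnit_iff_constantCoeff]
    simp
  obtain ⟨u, hu, hu0⟩ := HenselianRing.is_henselian f hmonic 0 hf0 (hf'0.map _)
  obtain ⟨ρ, rfl⟩ : X ∣ u := by simpa [Ideal.mem_span_singleton] using hu0
  refine ⟨ρ, X_mul_cancel ?_⟩
  simp only [hf, Polynomial.IsRoot, Polynomial.eval_add, Polynomial.eval_sub, Polynomial.eval_mul,
      Polynomial.eval_pow, Polynomial.eval_C, Polynomial.eval_X] at hu
  linear_combination -hu

theorem three_sub_two_mul_sq_mul_one_sub {R : Type*} [CommRing R] {x ρ : R}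
    (hρ : ρ = x * (ρ ^ 2 + 3 * ρ + 1)) {K : R} (hK : K * (1 + ρ) = 1) :
    (3 - 2 * (K * (1 + 2 * ρ))) ^ 2 * (1 - x) = 1 - 5 * x := by
  have hG : 3 - 2 * (K * (1 + 2 * ρ)) = K * (1 - ρ) := by linear_combination (-3) * hK
  calc (3 - 2 * (K * (1 + 2 * ρ))) ^ 2 * (1 - x) = K ^ 2 * ((1 - ρ) ^ 2 * (1 - x)) := by
        rw [hG]; ring
    _ = K ^ 2 * ((1 + ρ) ^ 2 * (1 - 5 * x)) := by linear_combination (-4 * K ^ 2) * hρ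
    _ = 1 - 5 * x := by linear_combination (K * (1 + ρ) + 1) * (1 - 5 * x) * hK

noncomputable def evenHeightSeries (c : ℕ → ℚ) (ρ K : ℚ⟦X⟧) : ℕ → ℚ⟦X⟧
  | 0 => K * (1 + 2 * ρ)
  | m + 1 => K * ρ ^ (m + 1) * (C (c (2 * m + 1)) + ρ)

theorem solvesEvenHeightSystem_evenHeightSeries {c : ℕ → ℚ} {ρ K : ℚ⟦X⟧}
    (hρ : ρ = X * (ρ ^ 2 + 3 * ρ + 1)) (hK : K * (1 + ρ) = 1) (hc0 : c 0 = 1) (hc1 : c 1 = 1)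
    (hmul : ∀ m, c (2 * m + 1) * c (2 * m + 2) = 1)
    (hadd : ∀ m, c (2 * m + 2) + c (2 * m + 3) = 3) :
    SolvesEvenHeightSystem c (evenHeightSeries c ρ K) := by
  refine ⟨?_, fun m => ?_⟩
  · simp only [evenHeightSeries, hc0, mul_zero, zero_add, hc1, map_one]
    linear_combination hK + K * hρ
  have hβ : C (c (2 * m + 1) * c (2 * m)) * evenHeightSeries c ρ K m =
      K * ρ ^ m * (C (c (2 * m + 1)) * (1 + (3 - C (c (2 * m + 1))) * ρ)) := by
    cases m with
    | zero =>
      simp only [evenHeightSeries, mul_zero, zero_add, hc0, hc1, mul_one, map_one, pow_zero]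
      ring
    | succ m =>
      have huv := congrArg C (hmul m)
      have htu := congrArg C (hadd m)
      simp only [map_mul, map_add, map_one, map_ofNat] at huv htu
      simp only [evenHeightSeries, map_mul, show 2 * (m + 1) = 2 * m + 2 by ring]
      linear_combination K * ρ ^ (m + 1) * C (c (2 * m + 3)) * huv
        + K * ρ ^ (m + 2) * C (c (2 * m + 3)) * htu
  have hlevel {s t w : ℚ⟦X⟧} (hst : s * t = 1) (hsw : s + w = 3) :
      ρ * (t + ρ) =
        X * (ρ ^ 2 * (w + ρ) + (s + t) * ρ * (t + ρ) + t * (1 + (3 - t) * ρ)) := by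
    linear_combination (t + ρ) * hρ - X * ρ ^ 2 * hsw - X * ρ * hst
  rw [hβ]
  simp only [evenHeightSeries, map_add, show 2 * (m + 1) + 1 = 2 * m + 3 by ring]
  linear_combination K * ρ ^ m * hlevel (s := C (c (2 * m + 2)))
    (by rw [← map_mul, mul_comm, hmul, map_one]) (by rw [← map_add, hadd, map_ofNat])

theorem Nat.fib_add_four_add_fib (n : ℕ) : Nat.fib (n + 4) + Nat.fib n = 3 * Nat.fib (n + 2) := by
  simp only [Nat.fib_add_two, show n + 4 = n + 2 + 2 by ring, show n + 3 = n + 1 + 2 by ring]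
  ring

theorem fibZ_natCast (n : ℕ) : fibZ n = Nat.fib n := rfl

theorem fibZ_two_mul_sub_one_pos (m : ℕ) : 0 < fibZ (2 * (m : ℤ) - 1) := by
  cases m with
  | zero => decide
  | succ m =>
    rw [show 2 * ((m + 1 : ℕ) : ℤ) - 1 = ((2 * m + 1 : ℕ) : ℤ) by push_cast; ring,
      fibZ_natCast]
    exact_mod_cast Nat.fib_pos.2 (by omega)

theorem fibZ_two_mul_sub_one_add (m : ℕ) :
    fibZ (2 * (m : ℤ) - 1) + fibZ (2 * ((m : ℤ) + 2) - 1) =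
      3 * fibZ (2 * ((m : ℤ) + 1) - 1) := by
  cases m with
  | zero => decide
  | succ m =>
    have h := Nat.fib_add_four_add_fib (2 * m + 1)
    rw [show 2 * ((m + 1 : ℕ) : ℤ) - 1 = ((2 * m + 1 : ℕ) : ℤ) by push_cast; ring,
      show 2 * (((m + 1 : ℕ) : ℤ) + 2) - 1 = ((2 * m + 1 + 4 : ℕ) : ℤ) by push_cast; ring,
      show 2 * (((m + 1 : ℕ) : ℤ) + 1) - 1 = ((2 * m + 1 + 2 : ℕ) : ℤ) by push_cast; ring]
    simp only [fibZ_natCast]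
    omega

section FibonacciWeights

variable {c : ℕ → ℚ}

theorem fibZ_weight_one
    (hodd : ∀ m : ℕ, 1 ≤ m →
      c (2 * m - 1) = (fibZ (2 * (m : ℤ) - 1) : ℚ) / (fibZ (2 * (m : ℤ) - 3) : ℚ)) :
    c 1 = 1 := by
  simpa [show fibZ 1 = 1 from rfl, show fibZ (-1) = 1 from rfl] using hodd 1 le_rfl

theorem fibZ_weight_odd_mul_even
    (hodd : ∀ m : ℕ, 1 ≤ m →
      c (2 * m - 1) = (fibZ (2 * (m : ℤ) - 1) : ℚ) / (fibZ (2 * (m : ℤ) - 3) : ℚ))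
    (heven : ∀ m : ℕ, 1 ≤ m →
      c (2 * m) = (fibZ (2 * (m : ℤ) - 3) : ℚ) / (fibZ (2 * (m : ℤ) - 1) : ℚ)) (m : ℕ) :
    c (2 * m + 1) * c (2 * m + 2) = 1 := by
  rw [show 2 * m + 1 = 2 * (m + 1) - 1 by omega, hodd (m + 1) (by omega),
    show 2 * m + 2 = 2 * (m + 1) by ring, heven (m + 1) (by omega)]
  have h1 := fibZ_two_mul_sub_one_pos m
  have h2 := fibZ_two_mul_sub_one_pos (m + 1)
  push_cast at h2 ⊢
  rw [show 2 * ((m : ℤ) + 1) - 3 = 2 * m - 1 by ring]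
  field_simp

theorem fibZ_weight_even_add_odd
    (hodd : ∀ m : ℕ, 1 ≤ m →
      c (2 * m - 1) = (fibZ (2 * (m : ℤ) - 1) : ℚ) / (fibZ (2 * (m : ℤ) - 3) : ℚ))
    (heven : ∀ m : ℕ, 1 ≤ m →
      c (2 * m) = (fibZ (2 * (m : ℤ) - 3) : ℚ) / (fibZ (2 * (m : ℤ) - 1) : ℚ)) (m : ℕ) :
    c (2 * m + 2) + c (2 * m + 3) = 3 := by
  rw [show 2 * m + 3 = 2 * (m + 2) - 1 by omega, hodd (m + 2) (by omega),
    show 2 * m + 2 = 2 * (m + 1) by ring, heven (m + 1) (by omega)]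
  have h2 := fibZ_two_mul_sub_one_pos (m + 1)
  have hsum := fibZ_two_mul_sub_one_add m
  push_cast at h2 ⊢
  rw [show 2 * ((m : ℤ) + 1) - 3 = 2 * m - 1 by ring,
    show 2 * ((m : ℤ) + 2) - 3 = 2 * (m + 1) - 1 by ring]
  field_simp
  exact_mod_cast hsum.trans (mul_comm _ _)

end FibonacciWeights

/-- The generating function `F = ∑ Dyck_n(d) Xⁿ` satisfies `(3 - 2F)² (1 - X) = 1 - 5X`,
and `F` is the branch with constant term 1. -/
theorem dyck_d_genfun_algebraic
(d : ℕ → ℚ) (hd0 : d 0 = 1)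
    (hdodd : ∀ m : ℕ, 1 ≤ m →
      d (2 * m - 1) = (fibZ (2 * (m : ℤ) - 1) : ℚ) / (fibZ (2 * (m : ℤ) - 3) : ℚ))
    (hdeven : ∀ m : ℕ, 1 ≤ m →
      d (2 * m) = (fibZ (2 * (m : ℤ) - 3) : ℚ) / (fibZ (2 * (m : ℤ) - 1) : ℚ)) :
    (3 - 2 * PowerSeries.mk fun n => dyckSum n d) ^ 2 * (1 - PowerSeries.X) =
        (1 - 5 * PowerSeries.X : PowerSeries ℚ) ∧
      PowerSeries.constantCoeff (PowerSeries.mk fun n => dyckSum n d) = 1 := by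
  obtain ⟨ρ, hρ⟩ := exists_eq_X_mul_sq_add (1 : ℚ) 3
  rw [map_one, map_ofNat] at hρ
  have hρ0 : constantCoeff ρ = 0 := by rw [hρ]; simp
  set K := (1 + ρ)⁻¹
  have hK : K * (1 + ρ) = 1 := PowerSeries.inv_mul_cancel _ (by simp [hρ0])
  have hsol := solvesEvenHeightSystem_evenHeightSeries hρ hK hd0 (fibZ_weight_one hdodd)
    (fibZ_weight_odd_mul_even hdodd hdeven) (fibZ_weight_even_add_odd hdodd hdeven)
  have hF : PowerSeries.mk (fun n => dyckSum n d) = K * (1 + 2 * ρ) := by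
    ext n
    rw [coeff_mk, dyckSum_eq_pathSum]
    exact (hsol.coeff_eq_pathSum n 0).symm
  have hK0 : constantCoeff K = 1 := by simpa [hρ0] using congrArg constantCoeff hK
  rw [hF]
  exact ⟨three_sub_two_mul_sq_mul_one_sub hρ hK, by simp [hK0, hρ0]⟩
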